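/- A Boolean function f : F_2^n → F_2 with nonempty support is correlation immune of order t if and only if the N × n array whose rows are the elements of supp(f) = {x ∈ F_2^n : f(x) = 1} (where N = w_H(f)) is a binary orthogonal array OA(N, n, 2, t), i.e., in every choice of t columns each of the 2^t binary t-tuples appears exactly N/2^t times among the rows. -/
import Mathlib

open Finset

private lemma zmod2_cases (a : ZMod 2) : a = 0 ∨ a = 1 := by revert a; decide

private lemma zmod2_ne0 (a : ZMod 2) : ¬ a = 0 ↔ a = 1 := by revert a; decide

private lemma zmod2_ne1 (a : ZMod 2) : ¬ a = 1 ↔ a = 0 := by revert a; decide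

private lemma cube_card {n : ℕ} (S : Finset (Fin n)) (y : Fin n → ZMod 2) :
    (univ.filter fun x : Fin n → ZMod 2 => ∀ i ∈ S, x i = y i).card = 2 ^ (n - S.card) := by
  have h : (univ.filter fun x : Fin n → ZMod 2 => ∀ i ∈ S, x i = y i)
      = Fintype.piFinset (fun i => if i ∈ S then {y i} else univ) := by
    ext x
    simp only [mem_filter, mem_univ, true_and, Fintype.mem_piFinset]
    constructor
    · intro h i
      by_cases hi : i ∈ S <;> simp [hi, h]
    · intro h i hi
      have := h i; simp [hi] at this; exact this
  rw [h, Fintype.card_piFinset]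
  have : ∀ i : Fin n, (if i ∈ S then ({y i} : Finset (ZMod 2)) else univ).card
      = if i ∈ S then 1 else 2 := by
    intro i; by_cases hi : i ∈ S <;> simp [hi]
  simp only [this]
  rw [Finset.prod_ite]
  simp only [Finset.prod_const, one_pow, one_mul]
  congr 1
  rw [show (univ.filter fun i : Fin n => ¬ i ∈ S) = Sᶜ by ext i; simp,
    Finset.card_compl, Fintype.card_fin]

private lemma key {n t : ℕ} (f : (Fin n → ZMod 2) → ZMod 2) (ht : t ≤ n)
    (H : ∀ S : Finset (Fin n), S.card = t → ∀ y : Fin n → ZMod 2,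
      (univ.filter fun x => f x = 1 ∧ ∀ i ∈ S, x i = y i).card * 2 ^ t
        = (univ.filter fun x => f x = 1).card) :
    ∀ d (S : Finset (Fin n)), S.card + d = t → ∀ y : Fin n → ZMod 2,
      (univ.filter fun x : Fin n → ZMod 2 => f x = 1 ∧ ∀ i ∈ S, x i = y i).card * 2 ^ S.card
        = (univ.filter fun x => f x = 1).card := by
  intro d
  induction d with
  | zero =>
    intro S hS y
    have hst : S.card = t := by omega
    have h := H S hst y
    rw [hst]
    exact h
  | succ d ih =>
    intro S hS y
    have hcompl : (Sᶜ : Finset (Fin n)).Nonempty := by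
      rw [← Finset.card_pos, Finset.card_compl, Fintype.card_fin]
      have := Finset.card_le_univ S
      simp only [Finset.card_univ, Fintype.card_fin] at this
      omega
    obtain ⟨i, hi⟩ := hcompl
    rw [Finset.mem_compl] at hi
    have hcardS' : (insert i S).card = S.card + 1 := Finset.card_insert_of_notMem hi
    have hc2 : (insert i S).card + d = t := by omega
    have h0 := ih (insert i S) hc2 (Function.update y i 0)
    have h1 := ih (insert i S) hc2 (Function.update y i 1)
    rw [hcardS'] at h0 h1
    have hsplit := Finset.card_filter_add_card_filter_not
      (s := univ.filter fun x : Fin n → ZMod 2 => f x = 1 ∧ ∀ j ∈ S, x j = y j)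
      (p := fun x => x i = 0)
    rw [Finset.filter_filter, Finset.filter_filter] at hsplit
    have key_iff : ∀ (c : ZMod 2) (x : Fin n → ZMod 2),
        ((f x = 1 ∧ ∀ j ∈ S, x j = y j) ∧ x i = c)
          ↔ (f x = 1 ∧ ∀ j ∈ insert i S, x j = Function.update y i c j) := by
      intro c x
      rw [Finset.forall_mem_insert, Function.update_self]
      constructor
      · rintro ⟨⟨hf, ha⟩, hc⟩
        exact ⟨hf, hc, fun j hj => by
          rw [Function.update_of_ne (by rintro rfl; exact hi hj)]; exact ha j hj⟩
      · rintro ⟨hf, hc, ha⟩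
        refine ⟨⟨hf, fun j hj => ?_⟩, hc⟩
        have := ha j hj
        rwa [Function.update_of_ne (by rintro rfl; exact hi hj)] at this
    have e0 : (univ.filter fun x : Fin n → ZMod 2 =>
        (f x = 1 ∧ ∀ j ∈ S, x j = y j) ∧ x i = 0)
        = univ.filter fun x => f x = 1 ∧ ∀ j ∈ insert i S, x j = Function.update y i 0 j := by
      apply Finset.filter_congr; intro x _; exact key_iff 0 x
    have e1 : (univ.filter fun x : Fin n → ZMod 2 =>
        (f x = 1 ∧ ∀ j ∈ S, x j = y j) ∧ ¬ x i = 0)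
        = univ.filter fun x => f x = 1 ∧ ∀ j ∈ insert i S, x j = Function.update y i 1 j := by
      apply Finset.filter_congr; intro x _
      rw [zmod2_ne0]; exact key_iff 1 x
    rw [e0, e1] at hsplit
    rw [← hsplit]
    set A0 := (univ.filter fun x : Fin n → ZMod 2 =>
      f x = 1 ∧ ∀ j ∈ insert i S, x j = Function.update y i 0 j).card with hA0
    set A1 := (univ.filter fun x : Fin n → ZMod 2 =>
      f x = 1 ∧ ∀ j ∈ insert i S, x j = Function.update y i 1 j).card with hA1
    set N1 := (univ.filter fun x : Fin n → ZMod 2 => f x = 1).card with hN1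
    have hp : (2:ℕ) ^ (S.card + 1) = 2 ^ S.card * 2 := by ring
    rw [hp] at h0 h1
    apply Nat.eq_of_mul_eq_mul_right (show 0 < 2 by norm_num)
    have hr : (A0 + A1) * 2 ^ S.card * 2 = A0 * (2 ^ S.card * 2) + A1 * (2 ^ S.card * 2) := by
      ring
    rw [hr, h0, h1]
    ring

/-- A Boolean function `f : F_2^n → F_2` with nonempty support is correlation immune of
order `t` iff the array whose rows are the elements of `supp f` is a binary orthogonal
array `OA(N, n, 2, t)` (`N = w_H(f)`): in every choice of `t` columns, each binary
`t`-tuple appears exactly `N / 2^t` times among the rows. -/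
theorem correlation_immune_iff_support_orthogonal_array {n t : ℕ} (ht : t ≤ n)
    (f : (Fin n → ZMod 2) → ZMod 2) (hne : ∃ x, f x = 1) :
    (∀ S : Finset (Fin n), S.card ≤ t → ∀ (v : ZMod 2) (y : Fin n → ZMod 2),
      2 ^ n * (univ.filter fun x : Fin n → ZMod 2 => f x = v ∧ ∀ i ∈ S, x i = y i).card
        = (univ.filter fun x : Fin n → ZMod 2 => f x = v).card
          * (univ.filter fun x : Fin n → ZMod 2 => ∀ i ∈ S, x i = y i).card)
    ↔ (∀ S : Finset (Fin n), S.card = t → ∀ y : Fin n → ZMod 2,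
        (univ.filter fun x : Fin n → ZMod 2 => f x = 1 ∧ ∀ i ∈ S, x i = y i).card * 2 ^ t
          = (univ.filter fun x : Fin n → ZMod 2 => f x = 1).card) := by
  constructor
  · -- correlation immune → OA
    intro H S hS y
    have h := H S (le_of_eq hS) 1 y
    rw [cube_card, hS] at h
    apply Nat.eq_of_mul_eq_mul_left (show 0 < 2 ^ (n - t) by positivity)
    calc 2 ^ (n - t) *
        ((univ.filter fun x : Fin n → ZMod 2 => f x = 1 ∧ ∀ i ∈ S, x i = y i).card * 2 ^ t)
        = 2 ^ (n - t + t) *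
          (univ.filter fun x : Fin n → ZMod 2 => f x = 1 ∧ ∀ i ∈ S, x i = y i).card := by
          rw [pow_add]; ring
      _ = 2 ^ n *
          (univ.filter fun x : Fin n → ZMod 2 => f x = 1 ∧ ∀ i ∈ S, x i = y i).card := by
          rw [Nat.sub_add_cancel ht]
      _ = (univ.filter fun x : Fin n → ZMod 2 => f x = 1).card * 2 ^ (n - t) := h
      _ = 2 ^ (n - t) * (univ.filter fun x : Fin n → ZMod 2 => f x = 1).card := by ring
  · -- OA → correlation immune
    intro H S hS v y
    have hsn : S.card ≤ n := by omega
    have hkey := key f ht H (t - S.card) S (by omega) y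
    rw [cube_card]
    have hpow : (2:ℕ) ^ n = 2 ^ (n - S.card) * 2 ^ S.card := by
      rw [← pow_add, Nat.sub_add_cancel hsn]
    have hv1 : 2 ^ n * (univ.filter fun x : Fin n → ZMod 2 =>
        f x = 1 ∧ ∀ i ∈ S, x i = y i).card
        = (univ.filter fun x : Fin n → ZMod 2 => f x = 1).card * 2 ^ (n - S.card) := by
      rw [hpow]
      calc 2 ^ (n - S.card) * 2 ^ S.card * (univ.filter fun x : Fin n → ZMod 2 =>
            f x = 1 ∧ ∀ i ∈ S, x i = y i).card
          = ((univ.filter fun x : Fin n → ZMod 2 =>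
              f x = 1 ∧ ∀ i ∈ S, x i = y i).card * 2 ^ S.card) * 2 ^ (n - S.card) := by ring
        _ = (univ.filter fun x : Fin n → ZMod 2 => f x = 1).card * 2 ^ (n - S.card) := by
            rw [hkey]
    rcases zmod2_cases v with rfl | rfl
    · -- v = 0 : complement argument
      have hsplitA := Finset.card_filter_add_card_filter_not
        (s := univ.filter fun x : Fin n → ZMod 2 => ∀ i ∈ S, x i = y i)
        (p := fun x => f x = 1)
      rw [Finset.filter_filter, Finset.filter_filter] at hsplitA
      have eA1 : (univ.filter fun x : Fin n → ZMod 2 =>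
          (∀ i ∈ S, x i = y i) ∧ f x = 1)
          = univ.filter fun x : Fin n → ZMod 2 => f x = 1 ∧ ∀ i ∈ S, x i = y i := by
        apply Finset.filter_congr; intro x _; exact and_comm
      have eA0 : (univ.filter fun x : Fin n → ZMod 2 =>
          (∀ i ∈ S, x i = y i) ∧ ¬ f x = 1)
          = univ.filter fun x : Fin n → ZMod 2 => f x = 0 ∧ ∀ i ∈ S, x i = y i := by
        apply Finset.filter_congr; intro x _; rw [zmod2_ne1]; exact and_comm
      rw [eA1, eA0, cube_card] at hsplitA
      have hsplitN := Finset.card_filter_add_card_filter_not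
        (s := (univ : Finset (Fin n → ZMod 2))) (p := fun x => f x = 1)
      have eN0 : (univ.filter fun x : Fin n → ZMod 2 => ¬ f x = 1)
          = univ.filter fun x : Fin n → ZMod 2 => f x = 0 := by
        apply Finset.filter_congr; intro x _; rw [zmod2_ne1]
      rw [eN0, Finset.card_univ] at hsplitN
      have hcard : Fintype.card (Fin n → ZMod 2) = 2 ^ n := by
        simp [Fintype.card_fun]
      rw [hcard] at hsplitN
      -- combine
      have hsum : 2 ^ n * (univ.filter fun x : Fin n → ZMod 2 =>
            f x = 1 ∧ ∀ i ∈ S, x i = y i).card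
          + 2 ^ n * (univ.filter fun x : Fin n → ZMod 2 =>
            f x = 0 ∧ ∀ i ∈ S, x i = y i).card
          = (univ.filter fun x : Fin n → ZMod 2 => f x = 1).card * 2 ^ (n - S.card)
          + (univ.filter fun x : Fin n → ZMod 2 => f x = 0).card * 2 ^ (n - S.card) := by
        rw [← Nat.mul_add, hsplitA, ← Nat.add_mul, hsplitN]
      rw [hv1] at hsum
      exact Nat.add_left_cancel hsum
    · exact hv1
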